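/- The forgetful functor from (inhabited) groupoids to pregroupoids, sending a groupoid G with object set G₀ to the pregroupoid G(G₀,G₀) with ternary operation y ∘ x⁻¹ ∘ z, has a left adjoint X ↦ X⁺ (the enveloping groupoid), and the unit of the adjunction η : X → X⁺(A,B) is injective. -/

import Mathlib

namespace Kock

/-- A pregroupoid on `A`, `B`: an inhabited type `X` with surjections `α`, `β` and a
partial ternary operation `op y x z` (meaning `y x⁻¹ z`), defined whenever
`β x = β y` and `α x = α z`; partiality is encoded by proof arguments, and the
axioms are quantified over all proofs of the book-keeping conditions. -/
structure Pregroupoid (A B X : Type*) : Type _ where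
  α : X → A
  β : X → B
  nonempty : Nonempty X
  α_surj : Function.Surjective α
  β_surj : Function.Surjective β
  op : (y x z : X) → β x = β y → α x = α z → X
  α_op : ∀ (y x z : X) (h1 : β x = β y) (h2 : α x = α z), α (op y x z h1 h2) = α y
  β_op : ∀ (y x z : X) (h1 : β x = β y) (h2 : α x = α z), β (op y x z h1 h2) = β z
  U1 : ∀ (x z : X) (h1 : β x = β x) (h2 : α x = α z), op x x z h1 h2 = z
  U2 : ∀ (y x : X) (h1 : β x = β y) (h2 : α x = α x), op y x x h1 h2 = y
  G1 : ∀ (v y x z : X) (h1 : β x = β y) (h2 : α x = α z) (h3 : β y = β v)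
      (h4 : α y = α (op y x z h1 h2)) (h5 : β x = β v),
      op v y (op y x z h1 h2) h3 h4 = op v x z h5 h2
  G2 : ∀ (y x z w : X) (h1 : β x = β y) (h2 : α x = α z)
      (h3 : β z = β (op y x z h1 h2)) (h4 : α z = α w) (h5 : α x = α w),
      op (op y x z h1 h2) z w h3 h4 = op y x w h1 h5


open CategoryTheory

/-- An object of the category of pregroupoids. -/
structure PregroupoidObj : Type 1 where
  A : Type
  B : Type
  X : Type
  str : Pregroupoid A B X

/-- A morphism of pregroupoids: maps `ξ₀ : A → A'`, `ξ₁ : B → B'`, `ξ : X → X'`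
commuting with the structural maps and preserving the ternary operation. -/
structure PregroupoidHom (P Q : PregroupoidObj) : Type where
  f0 : P.A → Q.A
  f1 : P.B → Q.B
  f : P.X → Q.X
  hα : ∀ x, Q.str.α (f x) = f0 (P.str.α x)
  hβ : ∀ x, Q.str.β (f x) = f1 (P.str.β x)
  hop : ∀ (y x z : P.X) (h1 : P.str.β x = P.str.β y) (h2 : P.str.α x = P.str.α z)
    (h1' : Q.str.β (f x) = Q.str.β (f y)) (h2' : Q.str.α (f x) = Q.str.α (f z)),
    f (P.str.op y x z h1 h2) = Q.str.op (f y) (f x) (f z) h1' h2'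

/-- The category of pregroupoids. -/
instance : Category PregroupoidObj where
  Hom := PregroupoidHom
  id P := ⟨id, id, id, fun _ => rfl, fun _ => rfl,
    fun _ _ _ _ _ _ _ => rfl⟩
  comp {P Q R} F G := ⟨G.f0 ∘ F.f0, G.f1 ∘ F.f1, G.f ∘ F.f,
    fun x => by simp [Function.comp, G.hα, F.hα],
    fun x => by simp [Function.comp, G.hβ, F.hβ],
    fun y x z h1 h2 h1' h2' => by
      dsimp only [Function.comp]
      rw [F.hop y x z h1 h2 (by rw [F.hβ, F.hβ, h1]) (by rw [F.hα, F.hα, h2])]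
      exact G.hop _ _ _ _ _ h1' h2'⟩
  id_comp _ := rfl
  comp_id _ := rfl
  assoc _ _ _ := rfl

/-- An object of the category of inhabited groupoids. -/
structure GrpdObj : Type 1 where
  C : Type
  [str : Groupoid.{0} C]
  ne : Nonempty C

attribute [instance] GrpdObj.str

/-- The category of inhabited groupoids, with functors as morphisms. -/
instance : Category GrpdObj where
  Hom G H := G.C ⥤ H.C
  id G := Functor.id G.C
  comp F G := F ⋙ G
  id_comp _ := rfl
  comp_id _ := rfl
  assoc _ _ _ := rfl

/-- The arrows of a groupoid `C`, as a single set. -/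
def GArr (C : Type) [Groupoid C] : Type := Σ a b : C, a ⟶ b

/-- The underlying pregroupoid `G(G₀,G₀)` of an inhabited groupoid, with
`yx⁻¹z := y ∘ x⁻¹ ∘ z` (composing from left to right). -/
def underlyingPregroupoid (C : Type) [Groupoid C] (ne : Nonempty C) :
    Pregroupoid C C (GArr C) where
  α s := s.1
  β s := s.2.1
  nonempty := ne.elim fun c => ⟨⟨c, c, 𝟙 c⟩⟩
  α_surj c := ⟨⟨c, c, 𝟙 c⟩, rfl⟩
  β_surj c := ⟨⟨c, c, 𝟙 c⟩, rfl⟩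
  op y x z h1 h2 := ⟨y.1, z.2.1,
    y.2.2 ≫ eqToHom h1.symm ≫ Groupoid.inv x.2.2 ≫ eqToHom h2 ≫ z.2.2⟩
  α_op _ _ _ _ _ := rfl
  β_op _ _ _ _ _ := rfl
  U1 := by
    rintro ⟨a, b, f⟩ ⟨a', b', g⟩ h1 h2
    obtain rfl : a = a' := h2
    refine congrArg (fun h => (⟨a, b', h⟩ : GArr C)) ?_
    simp
  U2 := by
    rintro ⟨a, b, f⟩ ⟨a', b', g⟩ h1 h2
    obtain rfl : b' = b := h1
    refine congrArg (fun h => (⟨a, b', h⟩ : GArr C)) ?_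
    simp
  G1 := by
    rintro ⟨av, bv, fv⟩ ⟨ay, b0, fy⟩ ⟨ax, bx, fx⟩ ⟨az, bz, fz⟩ h1 h2 h3 h4 h5
    obtain rfl : bx = b0 := h1
    obtain rfl : ax = az := h2
    obtain rfl : bx = bv := h3
    refine congrArg (fun h => (⟨av, bz, h⟩ : GArr C)) ?_
    simp
  G2 := by
    rintro ⟨ay, b0, fy⟩ ⟨ax, bx, fx⟩ ⟨az, bz, fz⟩ ⟨aw, bw, fw⟩ h1 h2 h3 h4 h5
    obtain rfl : bx = b0 := h1
    obtain rfl : ax = az := h2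
    obtain rfl : ax = aw := h4
    refine congrArg (fun h => (⟨ay, bw, h⟩ : GArr C)) ?_
    simp

/-- The forgetful functor from inhabited groupoids to pregroupoids,
`G ↦ G(G₀, G₀)`. -/
def forgetToPregroupoid : GrpdObj ⥤ PregroupoidObj where
  obj G := ⟨G.C, G.C, GArr G.C, underlyingPregroupoid G.C G.ne⟩
  map {G H} F :=
    letI F' : G.C ⥤ H.C := F
    { f0 := F'.obj
      f1 := F'.obj
      f := fun s => ⟨F'.obj s.1, F'.obj s.2.1, F'.map s.2.2⟩
      hα := fun _ => rfl
      hβ := fun _ => rfl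
      hop := by
        rintro ⟨ay, b0, fy⟩ ⟨ax, bx, fx⟩ ⟨az, bz, fz⟩ h1 h2 h1' h2'
        obtain rfl : ax = az := h2
        refine congrArg (fun h => (⟨F'.obj ay, F'.obj bz, h⟩ : GArr H.C)) ?_
        simp [underlyingPregroupoid, Groupoid.inv_eq_inv, eqToHom_map] }
  map_id _ := rfl
  map_comp _ _ := rfl


/-!
Choose for every `a : A` some `s a : X` with `α (s a) = a`, and for every `b : B` some
`s b : X` with `β (s b) = b`. In `X⁺` every object `u` then carries the arrows
`ℓ u : α (s u) ⟶ u` and `r u : u ⟶ β (s u)` with `ℓ u ≫ r u = s u`, and `f ↦ ℓ u ≫ f ≫ r v`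
identifies the arrows `u ⟶ v` with the `x : X` from `α (s u)` to `β (s v)`. So `X⁺` can be
built directly on `A ⊕ B` with these elements of `X` as arrows, composition
`x ≫ y = x (s v)⁻¹ y` and identities `s u`; the groupoid laws are the pregroupoid axioms, and
they hold for any family `m : O → X` in place of `s`.
The generator of `X⁺` attached to `x` is `x` itself, whence the injectivity of the unit. A
morphism `F` into `G(G₀, G₀)` extends to `X⁺` by `x ↦ (F (ℓ u))⁻¹ (F x) (F (r v))⁻¹`, and
the same decomposition shows that a functor out of `X⁺` is determined by its restriction to `X`.
-/

namespace Pregroupoid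

variable {A B X : Type*} (P : Pregroupoid A B X)

theorem op_assoc {y x z w v : X} (h1 : P.β x = P.β y) (h2 : P.α x = P.α z)
    (h3 : P.β w = P.β z) (h4 : P.α w = P.α v) (h5 : P.β w = P.β (P.op y x z h1 h2))
    (h6 : P.α x = P.α (P.op z w v h3 h4)) :
    P.op (P.op y x z h1 h2) w v h5 h4 = P.op y x (P.op z w v h3 h4) h1 h6 :=
  (P.G1 _ z w v h3 h4 (P.β_op y x z h1 h2).symm (P.α_op z w v h3 h4).symm h5).symm.trans
    (P.G2 y x z _ h1 h2 (P.β_op y x z h1 h2).symm (P.α_op z w v h3 h4).symm h6)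

theorem op_congr {y y' x x' z z' : X} (hy : y = y') (hx : x = x') (hz : z = z')
    (h1 : P.β x = P.β y) (h2 : P.α x = P.α z) (h1' : P.β x' = P.β y') (h2' : P.α x' = P.α z') :
    P.op y x z h1 h2 = P.op y' x' z' h1' h2' := by
  subst hy hx hz; rfl

-- A wrapper around `O`, so that the groupoid built from `m` does not become an instance on `O`.
structure Env (_P : Pregroupoid A B X) {O : Type*} (_m : O → X) where
  obj : O

namespace Env

variable {P} {O : Type*} {m : O → X}

instance : Quiver (Env P m) where
  Hom u v := {x : X // P.α x = P.α (m u.obj) ∧ P.β x = P.β (m v.obj)}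

instance : Groupoid (Env P m) where
  id u := ⟨m u.obj, rfl, rfl⟩
  comp {_ v _} f g := ⟨P.op f.1 (m v.obj) g.1 f.2.2.symm g.2.1.symm,
    (P.α_op ..).trans f.2.1, (P.β_op ..).trans g.2.2⟩
  id_comp _ := Subtype.ext (P.U1 _ _ _ _)
  comp_id _ := Subtype.ext (P.U2 _ _ _ _)
  assoc _ _ _ := Subtype.ext (P.op_assoc ..)
  inv {u v} f := ⟨P.op (m v.obj) f.1 (m u.obj) f.2.2 f.2.1, P.α_op .., P.β_op ..⟩
  inv_comp _ := Subtype.ext ((P.G2 _ _ _ _ _ _ _ _ rfl).trans (P.U2 _ _ _ rfl))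
  comp_inv _ := Subtype.ext ((P.G1 _ _ _ _ _ _ _ _ rfl).trans (P.U1 _ _ rfl _))

@[ext]
theorem hom_ext {u v : Env P m} {f g : u ⟶ v} (h : f.1 = g.1) : f = g :=
  Subtype.ext h

theorem eqToHom_val {u v : Env P m} (h : u = v) : (eqToHom h).1 = m u.obj := by
  subst h; rfl

theorem eqToHom_comp_val {u v w : Env P m} (h : u = v) (g : v ⟶ w) :
    (eqToHom h ≫ g).1 = g.1 := by
  subst h; simp

theorem comp_eqToHom_val {u v w : Env P m} (f : u ⟶ v) (h : v = w) :
    (f ≫ eqToHom h).1 = f.1 := by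
  subst h; simp

theorem comp_val_of_val_eq_left {u v w : Env P m} (f : u ⟶ v) (g : v ⟶ w)
    (hf : f.1 = m v.obj) : (f ≫ g).1 = g.1 := by
  obtain ⟨x, hx⟩ := f
  subst hf
  exact P.U1 ..

theorem comp_val_of_val_eq_right {u v w : Env P m} (f : u ⟶ v) (g : v ⟶ w)
    (hg : g.1 = m v.obj) : (f ≫ g).1 = f.1 := by
  obtain ⟨y, hy⟩ := g
  subst hg
  exact P.U2 ..

theorem comp_inv_comp_val {u v w z : Env P m} (f : u ⟶ v) (g : w ⟶ v) (h : w ⟶ z) :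
    (f ≫ inv g ≫ h).1 =
      P.op f.1 g.1 h.1 (g.2.2.trans f.2.2.symm) (g.2.1.trans h.2.1.symm) := by
  obtain ⟨x, hx⟩ := g
  rw [← Groupoid.inv_eq_inv]
  exact (P.op_congr rfl rfl (P.G2 _ x _ h.1 hx.2 hx.1 _ _ (hx.1.trans h.2.1.symm)) _ _ _ _).trans
    (P.G1 _ _ x _ _ _ f.2.2.symm (P.α_op ..).symm _)

end Env

noncomputable def frame : A ⊕ B → X :=
  Sum.elim (fun a => (P.α_surj a).choose) (fun b => (P.β_surj b).choose)

theorem α_frame_inl (a : A) : P.α (P.frame (.inl a)) = a := (P.α_surj a).choose_spec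

theorem β_frame_inr (b : B) : P.β (P.frame (.inr b)) = b := (P.β_surj b).choose_spec

abbrev Envelope : Type _ := Env P P.frame

namespace Envelope

abbrev inl (a : A) : P.Envelope := ⟨.inl a⟩

abbrev inr (b : B) : P.Envelope := ⟨.inr b⟩

variable {P}

noncomputable def gen (x : X) {a : A} {b : B} (ha : P.α x = a) (hb : P.β x = b) :
    inl P a ⟶ inr P b :=
  ⟨x, ha.trans (P.α_frame_inl a).symm, hb.trans (P.β_frame_inr b).symm⟩

noncomputable def frameIn (u : P.Envelope) : inl P (P.α (P.frame u.obj)) ⟶ u :=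
  ⟨P.frame u.obj, (P.α_frame_inl _).symm, rfl⟩

noncomputable def frameOut (u : P.Envelope) : u ⟶ inr P (P.β (P.frame u.obj)) :=
  ⟨P.frame u.obj, rfl, (P.β_frame_inr _).symm⟩

theorem frameIn_inl (a : A) :
    frameIn (inl P a) = eqToHom (congrArg (inl P) (P.α_frame_inl a)) := by
  ext
  rw [Env.eqToHom_val]
  exact congrArg (P.frame ∘ Sum.inl) (P.α_frame_inl a).symm

theorem frameOut_inr (b : B) :
    frameOut (inr P b) = eqToHom (congrArg (inr P) (P.β_frame_inr b).symm) := by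
  ext
  rw [Env.eqToHom_val]
  rfl

theorem frameIn_comp_comp_frameOut {u v : P.Envelope} (f : u ⟶ v) :
    frameIn u ≫ f ≫ frameOut v = gen f.1 f.2.1 f.2.2 := by
  ext
  rw [Env.comp_val_of_val_eq_left _ _ rfl, Env.comp_val_of_val_eq_right _ _ rfl]
  rfl

end Envelope

end Pregroupoid

namespace GArr

variable {C : Type} [Groupoid C]

theorem mk_eq_mk {c c' d d' : C} {f : c ⟶ d} {f' : c' ⟶ d'} (hc : c = c') (hd : d = d')
    (h : f = eqToHom hc ≫ f' ≫ eqToHom hd.symm) : (⟨c, d, f⟩ : GArr C) = ⟨c', d', f'⟩ := by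
  subst hc hd
  simp only [eqToHom_refl, Category.id_comp, Category.comp_id] at h
  rw [h]

theorem mk_inj {c d : C} {f g : c ⟶ d} : (⟨c, d, f⟩ : GArr C) = ⟨c, d, g⟩ ↔ f = g := by
  simp

theorem hom_eq_of_eq {s t : GArr C} (h : s = t) :
    s.2.2 = eqToHom (congrArg Sigma.fst h) ≫ t.2.2 ≫
      eqToHom (congrArg (fun s => s.2.1) h).symm := by
  subst h
  simp

end GArr

open Pregroupoid.Envelope (gen frameIn_comp_comp_frameOut)

noncomputable abbrev envelope (P : PregroupoidObj) : GrpdObj where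
  C := P.str.Envelope
  ne := P.str.nonempty.map fun x => Pregroupoid.Envelope.inl P.str (P.str.α x)

section EnvelopeUnit

variable (P : PregroupoidObj)

theorem envelope_garr_ext {s t : GArr P.str.Envelope} (h0 : s.1 = t.1) (h1 : s.2.1 = t.2.1)
    (h : s.2.2.1 = t.2.2.1) : s = t := by
  obtain ⟨u, v, f⟩ := s
  obtain ⟨u', v', g⟩ := t
  dsimp only at h0 h1 h
  subst h0 h1
  rw [Pregroupoid.Env.hom_ext h]

noncomputable def envelopeUnit : PregroupoidHom P (forgetToPregroupoid.obj (envelope P)) where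
  f0 := Pregroupoid.Envelope.inl P.str
  f1 := Pregroupoid.Envelope.inr P.str
  f x := ⟨_, _, gen x rfl rfl⟩
  hα _ := rfl
  hβ _ := rfl
  hop y x z h1 h2 _ _ := by
    refine envelope_garr_ext P (congrArg (Pregroupoid.Envelope.inl P.str) (P.str.α_op ..))
      (congrArg (Pregroupoid.Envelope.inr P.str) (P.str.β_op ..)) ?_
    dsimp only [forgetToPregroupoid, underlyingPregroupoid]
    rw [Groupoid.inv_eq_inv, ← Category.assoc, Pregroupoid.Env.comp_inv_comp_val]
    exact P.str.op_congr (Pregroupoid.Env.comp_eqToHom_val (gen y rfl rfl) _).symm rfl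
      (Pregroupoid.Env.eqToHom_comp_val _ (gen z rfl rfl)).symm _ _ _ _

theorem envelopeUnit_injective : Function.Injective (envelopeUnit P).f :=
  fun _ _ h => congrArg (fun s : GArr P.str.Envelope => s.2.2.1) h

end EnvelopeUnit

namespace PregroupoidHom

@[ext]
theorem ext {P Q : PregroupoidObj} {F F' : PregroupoidHom P Q} (h0 : F.f0 = F'.f0)
    (h1 : F.f1 = F'.f1) (h : F.f = F'.f) : F = F' := by
  cases F; cases F'; cases h0; cases h1; cases h; rfl

variable {P : PregroupoidObj} {G : GrpdObj} (F : PregroupoidHom P (forgetToPregroupoid.obj G))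

-- `F.f0` and `F.f1` retyped: their codomain `(forgetToPregroupoid.obj G).A` is `G.C` only up to
-- unfolding, which instance search does not see.
abbrev objA : P.A → G.C := F.f0

abbrev objB : P.B → G.C := F.f1

def arrow (x : P.X) {a : P.A} {b : P.B} (ha : P.str.α x = a) (hb : P.str.β x = b) :
    F.objA a ⟶ F.objB b :=
  eqToHom (by subst ha; exact (F.hα x).symm) ≫ (F.f x).2.2 ≫ eqToHom (by subst hb; exact F.hβ x)

theorem mk_arrow (x : P.X) {a : P.A} {b : P.B} (ha : P.str.α x = a) (hb : P.str.β x = b) :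
    (⟨F.objA a, F.objB b, F.arrow x ha hb⟩ : GArr G.C) = F.f x := by
  subst ha hb
  exact GArr.mk_eq_mk (F.hα x).symm (F.hβ x).symm rfl

theorem arrow_eq_iff (x : P.X) {a : P.A} {b : P.B} (ha : P.str.α x = a) (hb : P.str.β x = b)
    (g : F.objA a ⟶ F.objB b) :
    F.arrow x ha hb = g ↔ (⟨F.objA a, F.objB b, g⟩ : GArr G.C) = F.f x := by
  rw [← F.mk_arrow x ha hb, GArr.mk_inj, eq_comm]

theorem eqToHom_comp_arrow (x : P.X) {a a' : P.A} {b : P.B} (ha : P.str.α x = a)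
    (ha' : P.str.α x = a') (hb : P.str.β x = b) (h : F.objA a' = F.objA a) :
    eqToHom h ≫ F.arrow x ha hb = F.arrow x ha' hb := by
  subst ha ha'; simp

theorem arrow_comp_eqToHom (x : P.X) {a : P.A} {b b' : P.B} (ha : P.str.α x = a)
    (hb : P.str.β x = b) (hb' : P.str.β x = b') (h : F.objB b = F.objB b') :
    F.arrow x ha hb ≫ eqToHom h = F.arrow x ha hb' := by
  subst hb hb'; simp

theorem arrow_op {y x z : P.X} (h1 : P.str.β x = P.str.β y) (h2 : P.str.α x = P.str.α z)
    {a : P.A} {b c : P.B} {d : P.A} (ha : P.str.α y = a) (hc : P.str.β y = c)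
    (hc' : P.str.β x = c) (hd : P.str.α x = d) (hd' : P.str.α z = d) (hb : P.str.β z = b) :
    F.arrow (P.str.op y x z h1 h2) ((P.str.α_op ..).trans ha) ((P.str.β_op ..).trans hb) =
      F.arrow y ha hc ≫ inv (F.arrow x hd hc') ≫ F.arrow z hd' hb := by
  subst ha hb hc hd
  have hop := GArr.hom_eq_of_eq
    (F.hop y x z h1 h2 (by rw [F.hβ, F.hβ, h1]) (by rw [F.hα, F.hα, h2]))
  simp only [arrow]
  rw [hop]
  simp only [forgetToPregroupoid, underlyingPregroupoid, Groupoid.inv_eq_inv, Category.assoc,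
    IsIso.inv_comp, inv_eqToHom, eqToHom_trans_assoc]
  erw [eqToHom_trans_assoc, eqToHom_trans]

-- What `F.lift` below has to send `Envelope.frameIn u` and `Envelope.frameOut u` to.
noncomputable def frameIn :
    ∀ u : P.str.Envelope, F.objA (P.str.α (P.str.frame u.obj)) ⟶ Sum.elim F.objA F.objB u.obj
  | ⟨.inl a⟩ => eqToHom (congrArg F.objA (P.str.α_frame_inl a))
  | ⟨.inr b⟩ => F.arrow (P.str.frame (.inr b)) rfl (P.str.β_frame_inr b)

noncomputable def frameOut :
    ∀ u : P.str.Envelope, Sum.elim F.objA F.objB u.obj ⟶ F.objB (P.str.β (P.str.frame u.obj))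
  | ⟨.inl a⟩ => F.arrow (P.str.frame (.inl a)) (P.str.α_frame_inl a) rfl
  | ⟨.inr b⟩ => eqToHom (congrArg F.objB (P.str.β_frame_inr b).symm)

theorem frameIn_comp_frameOut (u : P.str.Envelope) :
    F.frameIn u ≫ F.frameOut u = F.arrow (P.str.frame u.obj) rfl rfl := by
  rcases u with ⟨a | b⟩
  · exact F.eqToHom_comp_arrow _ (P.str.α_frame_inl a) rfl rfl (congrArg _ (P.str.α_frame_inl a))
  · exact F.arrow_comp_eqToHom _ rfl (P.str.β_frame_inr b) rfl
      (congrArg _ (P.str.β_frame_inr b).symm)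

noncomputable def lift : envelope P ⟶ G where
  obj u := Sum.elim F.objA F.objB u.obj
  map {u v} f := inv (F.frameIn u) ≫ F.arrow f.1 f.2.1 f.2.2 ≫ inv (F.frameOut v)
  map_id u := by
    change inv _ ≫ F.arrow (P.str.frame u.obj) rfl rfl ≫ inv _ = _
    simp [← frameIn_comp_frameOut]
  map_comp {u v w} f g := by
    change inv _ ≫ F.arrow (P.str.op f.1 (P.str.frame v.obj) g.1 _ _) _ _ ≫ inv _ = _
    rw [F.arrow_op _ _ f.2.1 f.2.2 rfl rfl g.2.1 g.2.2, ← frameIn_comp_frameOut]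
    simp

end PregroupoidHom

section HomEquiv

variable {P : PregroupoidObj} {G : GrpdObj} (Φ : envelope P ⟶ G)

noncomputable abbrev envelopeRestrict : PregroupoidHom P (forgetToPregroupoid.obj G) where
  f0 a := Φ.obj (Pregroupoid.Envelope.inl P.str a)
  f1 b := Φ.obj (Pregroupoid.Envelope.inr P.str b)
  f x := ⟨_, _, Φ.map (gen x rfl rfl)⟩
  hα _ := rfl
  hβ _ := rfl
  hop := (envelopeUnit P ≫ forgetToPregroupoid.map Φ).hop

theorem envelopeRestrict_lift (F : PregroupoidHom P (forgetToPregroupoid.obj G)) :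
    envelopeRestrict F.lift = F := by
  refine PregroupoidHom.ext rfl rfl (funext fun x =>
    (F.arrow_eq_iff x rfl rfl (F.lift.map (gen x rfl rfl))).1 ?_)
  change _ = inv (eqToHom (congrArg F.objA (P.str.α_frame_inl _))) ≫
    F.arrow x (P.str.α_frame_inl _).symm (P.str.β_frame_inr _).symm ≫
    inv (eqToHom (congrArg F.objB (P.str.β_frame_inr _).symm))
  rw [inv_eqToHom, inv_eqToHom, F.arrow_comp_eqToHom _ _ _ rfl, F.eqToHom_comp_arrow _ _ rfl]

theorem arrow_envelopeRestrict (x : P.X) {a : P.A} {b : P.B} (ha : P.str.α x = a)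
    (hb : P.str.β x = b) : (envelopeRestrict Φ).arrow x ha hb = Φ.map (gen x ha hb) := by
  subst ha hb
  exact (PregroupoidHom.arrow_eq_iff _ x rfl rfl _).2 rfl

theorem envelopeRestrict_obj (u : P.str.Envelope) :
    Sum.elim (envelopeRestrict Φ).objA (envelopeRestrict Φ).objB u.obj = Φ.obj u := by
  obtain ⟨a | b⟩ := u <;> rfl

theorem frameIn_envelopeRestrict (u : P.str.Envelope) :
    (envelopeRestrict Φ).frameIn u =
      Φ.map (Pregroupoid.Envelope.frameIn u) ≫ eqToHom (envelopeRestrict_obj Φ u).symm := by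
  rcases u with ⟨a | b⟩
  · simp only [Pregroupoid.Envelope.frameIn_inl, eqToHom_map, eqToHom_trans]
    rfl
  · exact (arrow_envelopeRestrict Φ _ rfl (P.str.β_frame_inr b)).trans (Category.comp_id _).symm

theorem frameOut_envelopeRestrict (u : P.str.Envelope) :
    (envelopeRestrict Φ).frameOut u =
      eqToHom (envelopeRestrict_obj Φ u) ≫ Φ.map (Pregroupoid.Envelope.frameOut u) := by
  rcases u with ⟨a | b⟩
  · exact (arrow_envelopeRestrict Φ _ (P.str.α_frame_inl a) rfl).trans (Category.id_comp _).symm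
  · simp only [Pregroupoid.Envelope.frameOut_inr, eqToHom_map, eqToHom_trans]
    rfl

theorem lift_envelopeRestrict : (envelopeRestrict Φ).lift = Φ := by
  refine CategoryTheory.Functor.ext (envelopeRestrict_obj Φ) fun u v f => ?_
  change inv _ ≫ (envelopeRestrict Φ).arrow f.1 f.2.1 f.2.2 ≫ inv _ = _
  simp only [frameIn_envelopeRestrict, frameOut_envelopeRestrict, arrow_envelopeRestrict]
  rw [← frameIn_comp_comp_frameOut]
  simp only [IsIso.inv_comp, inv_eqToHom, Functor.map_comp, Category.assoc,
    IsIso.hom_inv_id_assoc, IsIso.inv_hom_id_assoc]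
  rfl

end HomEquiv

noncomputable def envelopeHomEquiv (P : PregroupoidObj) (G : GrpdObj) :
    (envelope P ⟶ G) ≃ (P ⟶ forgetToPregroupoid.obj G) where
  toFun := envelopeRestrict
  invFun := PregroupoidHom.lift
  left_inv := lift_envelopeRestrict
  right_inv := envelopeRestrict_lift

noncomputable def envelopeFunctor : PregroupoidObj ⥤ GrpdObj :=
  Adjunction.leftAdjointOfEquiv envelopeHomEquiv fun _ _ _ _ _ => rfl

noncomputable def envelopeAdjunction : envelopeFunctor ⊣ forgetToPregroupoid :=
  Adjunction.adjunctionOfEquivLeft _ _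

/-- The forgetful functor from inhabited groupoids to
pregroupoids has a left adjoint (the enveloping groupoid construction
`X ↦ X⁺`), and the unit of the adjunction (the front adjunction
`η : X → X⁺(A,B)`) is injective at every pregroupoid. -/
theorem forgetful_has_leftAdjoint_with_injective_unit :
    ∃ (L : PregroupoidObj ⥤ GrpdObj) (adj : L ⊣ forgetToPregroupoid),
      ∀ P : PregroupoidObj,
        Function.Injective (PregroupoidHom.f (adj.unit.app P)) :=
  ⟨envelopeFunctor, envelopeAdjunction, envelopeUnit_injective⟩

end Kock
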